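/- Let E be a real inner product space, let f : E → ℝ be differentiable with L_Θ-Lipschitz gradient and G-Lipschitz, and let γ : [0,1] → E be twice continuously differentiable with ‖γ''(t)‖ ≤ C·‖γ'(0)‖² for all t ∈ [0,1]. Then for every t ∈ [0,1], |f(γ(t)) − f(γ(0)) − t·⟨∇f(γ(0)), γ'(0)⟩| ≤ ((L_Θ + G·C)/2)·t²·‖γ'(0)‖². In particular, f(γ(t)) ≥ f(γ(0)) + t·⟨∇f(γ(0)), γ'(0)⟩ − ((L_Θ + G·C)/2)·t²·‖γ'(0)‖². -/

import Mathlib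

open scoped RealInnerProductSpace
open Set

/-!
Compare `γ t` with the point `γ 0 + t • γ' 0` on the tangent line. The curvature bound keeps
them within `C ‖γ' 0‖² t² / 2`, which the `G`-Lipschitz `f` turns into an error `G C ‖γ' 0‖² t² / 2`;
along the tangent line the Lipschitz gradient gives the descent-lemma error `L t² ‖γ' 0‖² / 2`.
Both second-order estimates come from the same comparison: a function whose derivative is at most
`K (s - a)` in norm moves by at most `K (s - a)² / 2`.
-/

section

variable {F : Type*} [NormedAddCommGroup F] [NormedSpace ℝ F] {a b : ℝ}

theorem norm_image_sub_le_of_norm_deriv_le_mul_sub_segment {g g' : ℝ → F} {K : ℝ}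
    (hg : ∀ s ∈ Icc a b, HasDerivWithinAt g (g' s) (Icc a b) s)
    (bound : ∀ s ∈ Ico a b, ‖g' s‖ ≤ K * (s - a)) :
    ∀ t ∈ Icc a b, ‖g t - g a‖ ≤ K * (t - a) ^ 2 / 2 := by
  have hB : ∀ s, HasDerivAt (fun s => K * (s - a) ^ 2 / 2) (K * (s - a)) s := fun s => by
    refine ((((hasDerivAt_id' s).sub_const a).pow 2).const_mul K |>.div_const 2).congr_deriv ?_
    norm_num; ring
  refine image_norm_le_of_norm_deriv_right_le_deriv_boundary
    (fun s hs => ((hg s hs).sub_const (g a)).continuousWithinAt)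
    (fun s hs => ((hg s (Ico_subset_Icc_self hs)).sub_const (g a)).mono_of_mem_nhdsWithin
      (Icc_mem_nhdsGE_of_mem hs)) (by simp) hB bound

theorem norm_sub_sub_smul_le_of_norm_deriv2_le {γ γ' γ'' : ℝ → F} {K : ℝ}
    (hγ' : ∀ s ∈ Icc a b, HasDerivWithinAt γ (γ' s) (Icc a b) s)
    (hγ'' : ∀ s ∈ Icc a b, HasDerivWithinAt γ' (γ'' s) (Icc a b) s)
    (bound : ∀ s ∈ Icc a b, ‖γ'' s‖ ≤ K) :
    ∀ t ∈ Icc a b, ‖γ t - γ a - (t - a) • γ' a‖ ≤ K * (t - a) ^ 2 / 2 := by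
  have hγ'_sub : ∀ s ∈ Icc a b, ‖γ' s - γ' a‖ ≤ K * (s - a) :=
    norm_image_sub_le_of_norm_deriv_le_segment' hγ''
      fun s hs => bound s (Ico_subset_Icc_self hs)
  intro t ht
  have := norm_image_sub_le_of_norm_deriv_le_mul_sub_segment
    (g := fun s => γ s - (s - a) • γ' a) (g' := fun s => γ' s - γ' a)
    (fun s hs => by
      convert (hγ' s hs).sub (((hasDerivAt_id s).sub_const a).smul_const (γ' a)).hasDerivWithinAt
        using 1
      · ext; simp
      · simp)
    (fun s hs => hγ'_sub s (Ico_subset_Icc_self hs)) t ht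
  simpa [sub_right_comm] using this

end

theorem nonneg_of_abs_sub_le_mul_norm {E : Type*} [NormedAddCommGroup E] {f : E → ℝ} {G : ℝ}
    (hf : ∀ x y, |f x - f y| ≤ G * ‖x - y‖) {x y : E} (hxy : x ≠ y) : 0 ≤ G :=
  nonneg_of_mul_nonneg_left ((abs_nonneg _).trans (hf x y)) (norm_pos_iff.2 (sub_ne_zero.2 hxy))

theorem abs_sub_sub_inner_le_of_lipschitz_gradient
    {E : Type*} [NormedAddCommGroup E] [InnerProductSpace ℝ E] {f : E → ℝ} {gradf : E → E} {L : ℝ}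
    (hderiv : ∀ x, HasFDerivAt f (innerSL ℝ (gradf x)) x)
    (hgradLip : ∀ x y, ‖gradf x - gradf y‖ ≤ L * ‖x - y‖) (x v : E) :
    |f (x + v) - f x - ⟪gradf x, v⟫| ≤ L / 2 * ‖v‖ ^ 2 := by
  have hderiv_line : ∀ s : ℝ, HasDerivAt (fun s : ℝ => f (x + s • v) - s * ⟪gradf x, v⟫)
      (⟪gradf (x + s • v), v⟫ - ⟪gradf x, v⟫) s := fun s => by
    have hline : HasDerivAt (fun s : ℝ => x + s • v) v s := by
      simpa using ((hasDerivAt_id s).smul_const v).const_add x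
    have h := ((hderiv _).comp_hasDerivAt s hline).sub ((hasDerivAt_id' s).mul_const ⟪gradf x, v⟫)
    rwa [innerSL_apply_apply, one_mul] at h
  have hbound : ∀ s ∈ Ico (0 : ℝ) 1,
      ‖⟪gradf (x + s • v), v⟫ - ⟪gradf x, v⟫‖ ≤ L * ‖v‖ ^ 2 * (s - 0) := fun s hs =>
    calc ‖⟪gradf (x + s • v), v⟫ - ⟪gradf x, v⟫‖
        = |⟪gradf (x + s • v) - gradf x, v⟫| := by rw [inner_sub_left, Real.norm_eq_abs]
      _ ≤ ‖gradf (x + s • v) - gradf x‖ * ‖v‖ := abs_real_inner_le_norm _ _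
      _ ≤ L * ‖s • v‖ * ‖v‖ := by
          gcongr; simpa using hgradLip (x + s • v) x
      _ = L * ‖v‖ ^ 2 * (s - 0) := by
          rw [norm_smul, Real.norm_of_nonneg hs.1]; ring
  have := norm_image_sub_le_of_norm_deriv_le_mul_sub_segment
    (fun s _ => (hderiv_line s).hasDerivWithinAt) hbound 1 (right_mem_Icc.2 zero_le_one)
  rw [Real.norm_eq_abs] at this
  convert this using 2 <;> simp [div_mul_eq_mul_div, sub_right_comm]

theorem stmt0_general {E : Type*} [NormedAddCommGroup E] [InnerProductSpace ℝ E]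
    (f : E → ℝ) (gradf : E → E) (LΘ G C : ℝ)
    (hderiv : ∀ x : E, HasFDerivAt f (innerSL ℝ (gradf x)) x)
    (hgradLip : ∀ x y : E, ‖gradf x - gradf y‖ ≤ LΘ * ‖x - y‖)
    (hfLip : ∀ x y : E, |f x - f y| ≤ G * ‖x - y‖)
    (γ γ' γ'' : ℝ → E)
    (hγ' : ∀ t ∈ Set.Icc (0:ℝ) 1, HasDerivWithinAt γ (γ' t) (Set.Icc 0 1) t)
    (hγ'' : ∀ t ∈ Set.Icc (0:ℝ) 1, HasDerivWithinAt γ' (γ'' t) (Set.Icc 0 1) t)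
    (hcurv : ∀ t ∈ Set.Icc (0:ℝ) 1, ‖γ'' t‖ ≤ C * ‖γ' 0‖ ^ 2) :
    ∀ t ∈ Set.Icc (0:ℝ) 1,
      |f (γ t) - f (γ 0) - t * ⟪gradf (γ 0), γ' 0⟫| ≤
        ((LΘ + G * C) / 2) * t ^ 2 * ‖γ' 0‖ ^ 2 ∧
      f (γ t) ≥ f (γ 0) + t * ⟪gradf (γ 0), γ' 0⟫
        - ((LΘ + G * C) / 2) * t ^ 2 * ‖γ' 0‖ ^ 2 := by
  intro t ht
  have hcurve : ‖γ t - (γ 0 + t • γ' 0)‖ ≤ C * ‖γ' 0‖ ^ 2 * t ^ 2 / 2 := by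
    simpa [sub_sub] using norm_sub_sub_smul_le_of_norm_deriv2_le hγ' hγ'' hcurv t ht
  have hcurve_value : |f (γ t) - f (γ 0 + t • γ' 0)| ≤ G * (C * ‖γ' 0‖ ^ 2 * t ^ 2 / 2) := by
    refine (hfLip _ _).trans ?_
    -- `G ≥ 0` as soon as `E` has a nonzero vector; if `γ' 0 = 0` then `hcurve` forces `γ t = γ 0`.
    rcases eq_or_ne (γ' 0) 0 with hv | hv
    · simp_all
    · exact mul_le_mul_of_nonneg_left hcurve (nonneg_of_abs_sub_le_mul_norm hfLip hv)
  have htangent := abs_sub_sub_inner_le_of_lipschitz_gradient hderiv hgradLip (γ 0) (t • γ' 0)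
  rw [inner_smul_right, norm_smul, Real.norm_eq_abs, mul_pow, sq_abs] at htangent
  have htriangle := abs_sub_le (f (γ t)) (f (γ 0 + t • γ' 0)) (f (γ 0) + t * ⟪gradf (γ 0), γ' 0⟫)
  rw [← sub_sub, ← sub_sub] at htriangle
  have habs : |f (γ t) - f (γ 0) - t * ⟪gradf (γ 0), γ' 0⟫| ≤
      ((LΘ + G * C) / 2) * t ^ 2 * ‖γ' 0‖ ^ 2 := by
    linarith
  exact ⟨habs, by linarith [(abs_le.mp habs).1]⟩

/-- Taylor-type bound along a curve for an L-smooth, Lipschitz loss,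
with curvature bound ‖γ''(t)‖ ≤ C·‖γ'(0)‖². -/
theorem stmt0 {E : Type*} [NormedAddCommGroup E] [InnerProductSpace ℝ E]
    (f : E → ℝ) (gradf : E → E) (LΘ G C : ℝ)
    (hderiv : ∀ x : E, HasFDerivAt f (innerSL ℝ (gradf x)) x)
    (hgradLip : ∀ x y : E, ‖gradf x - gradf y‖ ≤ LΘ * ‖x - y‖)
    (hfLip : ∀ x y : E, |f x - f y| ≤ G * ‖x - y‖)
    (γ γ' γ'' : ℝ → E)
    (hγ' : ∀ t ∈ Set.Icc (0:ℝ) 1, HasDerivWithinAt γ (γ' t) (Set.Icc 0 1) t)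
    (hγ'' : ∀ t ∈ Set.Icc (0:ℝ) 1, HasDerivWithinAt γ' (γ'' t) (Set.Icc 0 1) t)
    (hγ''cont : ContinuousOn γ'' (Set.Icc 0 1))
    (hcurv : ∀ t ∈ Set.Icc (0:ℝ) 1, ‖γ'' t‖ ≤ C * ‖γ' 0‖ ^ 2) :
    ∀ t ∈ Set.Icc (0:ℝ) 1,
      |f (γ t) - f (γ 0) - t * ⟪gradf (γ 0), γ' 0⟫| ≤
        ((LΘ + G * C) / 2) * t ^ 2 * ‖γ' 0‖ ^ 2 ∧
      f (γ t) ≥ f (γ 0) + t * ⟪gradf (γ 0), γ' 0⟫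
        - ((LΘ + G * C) / 2) * t ^ 2 * ‖γ' 0‖ ^ 2 :=
  stmt0_general f gradf LΘ G C hderiv hgradLip hfLip γ γ' γ'' hγ' hγ'' hcurv
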